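/- arXiv:2302.04487 — 4 statements merged into one kernel-verified Lean document; each statement's English description precedes it below -/
import Mathlib

section
/- For all positive integers k, t, s, r and n satisfying max(t+1, s) ≤ k ≤ n and r ≥ 2, one has M(n,r,k,t,s) ≥ r^(−s/(k−t)) · C(n,s), where C(n,s) is the binomial coefficient. -/
open Finset

/-- The `s`-shadow of a hypergraph `H`: all `s`-element vertex sets contained in
some edge of `H`. -/
def hShadow {V : Type*} [DecidableEq V] (s : ℕ) (H : Finset (Finset V)) :
    Finset (Finset V) :=
  H.biUnion fun e => e.powersetCard s

/-- One step of `t`-tight connectivity: both `a` and `b` are edges of `H` and they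
share at least `t` vertices. -/
def TightStep {V : Type*} [DecidableEq V] (t : ℕ) (H : Finset (Finset V))
    (a b : Finset V) : Prop :=
  a ∈ H ∧ b ∈ H ∧ t ≤ (a ∩ b).card

/-- Two edges lie in the same `t`-tight component iff they are joined by a chain of
edges, consecutive ones sharing at least `t` vertices. -/
def TightConn {V : Type*} [DecidableEq V] (t : ℕ) (H : Finset (Finset V)) :
    Finset V → Finset V → Prop :=
  Relation.ReflTransGen (TightStep t H)

open scoped Classical in
/-- The `t`-tight component of the edge `e` in the hypergraph `H`. -/
noncomputable def tightComponent {V : Type*} [DecidableEq V] (t : ℕ)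
    (H : Finset (Finset V)) (e : Finset V) : Finset (Finset V) :=
  H.filter fun f => TightConn t H e f

/-- The `k`-uniform hypergraph `H i` of edges of `K^k_n` having color `i` under the
coloring `c`. -/
def colorClass (n r k : ℕ) (c : Finset (Fin n) → Fin r) (i : Fin r) :
    Finset (Finset (Fin n)) :=
  (Finset.univ.powersetCard k).filter fun e => c e = i

/-- `M(n,r,k,t,s;c)`: the largest number of vertex `s`-sets contained in the edges of
a monochromatic `t`-tight component of the `r`-coloring `c` of `K^k_n`. -/
noncomputable def Mcol (n r k t s : ℕ) (c : Finset (Fin n) → Fin r) : ℕ :=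
  Finset.univ.sup fun i : Fin r =>
    (colorClass n r k c i).sup fun e =>
      (hShadow s (tightComponent t (colorClass n r k c i) e)).card

/-- `M(n,r,k,t,s)`: the minimum of `M(n,r,k,t,s;c)` over all `r`-colorings `c` of
`K^k_n`. -/
noncomputable def Mmin (n r k t s : ℕ) : ℕ :=
  sInf {m | ∃ c : Finset (Fin n) → Fin r, Mcol n r k t s c = m}

/-!
Fix an optimal colouring. Distinct `t`-tight components of one colour have disjoint `t`-shadows,
so over all monochromatic components the sizes `|C|` add up to `C(n,k)` while the `t`-shadow
sizes add up to at most `r C(n,t)`; some component therefore has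
`C(n,k) |∂_t C| ≤ r C(n,t) |C|`. Write `|C| = C(x,k)` with real `k ≤ x ≤ n`. Lovász's form of the
Kruskal–Katona theorem gives `|∂_t C| ≥ C(x,t)` and `|∂_s C| ≥ C(x,s)`, and the first bound
becomes `∏_{t ≤ j < k} (x-j)/(n-j) ≥ 1/r`. The ratios `(x-j)/(n-j)` decrease in `j`, so their
geometric mean over `[0,s)` is at least the one over `[t,k)`, i.e. at least `r^(-1/(k-t))`;
this is `C(x,s) ≥ r^(-s/(k-t)) C(n,s)`.
-/

open scoped FinsetFamily

/-! ### Real binomial coefficients -/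

lemma Ring.choose_real_eq_eval_div (x : ℝ) (m : ℕ) :
    Ring.choose x m = (descPochhammer ℝ m).eval x / m.factorial := by
  rw [Ring.choose_eq_smul, ← descPochhammer_map (algebraMap ℤ ℝ),
    Polynomial.eval_map_algebraMap, Polynomial.aeval_eq_smeval, smul_eq_mul, inv_mul_eq_div]

lemma Ring.choose_real_eq_prod_div (x : ℝ) (m : ℕ) :
    Ring.choose x m = (∏ j ∈ range m, (x - j)) / m.factorial := by
  rw [Ring.choose_real_eq_eval_div, descPochhammer_eval_eq_prod_range]

lemma Ring.choose_real_pos {x : ℝ} {m : ℕ} (h : (m : ℝ) - 1 < x) : 0 < Ring.choose x m := by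
  rw [Ring.choose_real_eq_eval_div]
  exact div_pos (descPochhammer_pos h) (by positivity)

lemma Ring.choose_real_nonneg {x : ℝ} {m : ℕ} (h : (m : ℝ) - 1 ≤ x) :
    0 ≤ Ring.choose x m := by
  rw [Ring.choose_real_eq_eval_div]
  exact div_nonneg (descPochhammer_nonneg h) (by positivity)

lemma Ring.choose_real_le_choose {x y : ℝ} {m : ℕ} (hx : (m : ℝ) - 1 ≤ x) (hxy : x ≤ y) :
    Ring.choose x m ≤ Ring.choose y m := by
  simp_rw [Ring.choose_real_eq_eval_div]
  gcongr
  exact monotoneOn_descPochhammer_eval m hx (hx.trans hxy) hxy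

lemma Ring.choose_real_pascal (x : ℝ) (m : ℕ) :
    Ring.choose x (m + 1) = Ring.choose (x - 1) m + Ring.choose (x - 1) (m + 1) := by
  simpa using Ring.choose_succ_succ (x - 1) m

lemma Ring.choose_real_div_choose (x : ℝ) (n m : ℕ) :
    Ring.choose x m / n.choose m = ∏ j ∈ range m, (x - j) / (n - j) := by
  rw [← Ring.choose_natCast, Ring.choose_real_eq_prod_div, Ring.choose_real_eq_prod_div,
    div_div_div_cancel_right₀ (by positivity), prod_div_distrib]

lemma continuous_ringChoose (m : ℕ) : Continuous fun x : ℝ => Ring.choose x m := by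
  simp_rw [Ring.choose_real_eq_eval_div]
  exact (descPochhammer ℝ m).continuous.div_const _

lemma exists_ringChoose_eq {k n : ℕ} {c : ℝ} (hkn : k ≤ n) (h1 : 1 ≤ c)
    (h2 : c ≤ n.choose k) :
    ∃ x ∈ Set.Icc (k : ℝ) n, Ring.choose x k = c := by
  have hc : c ∈ Set.Icc (Ring.choose (k : ℝ) k) (Ring.choose (n : ℝ) k) := by
    rw [Ring.choose_natCast, Ring.choose_natCast, Nat.choose_self, Nat.cast_one]
    exact ⟨h1, h2⟩
  exact intermediate_value_Icc (by exact_mod_cast hkn) (continuous_ringChoose k).continuousOn hc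

/-! ### Geometric means of antitone sequences -/

section OrderedSemiring

variable {ι R : Type*} [CommSemiring R] [LinearOrder R] [IsStrictOrderedRing R]

lemma prod_pow_card_le_prod_pow_card {f : ι → R} {A B : Finset ι}
    (h : ∀ a ∈ A, ∀ b ∈ B, f b ≤ f a) (hB : ∀ b ∈ B, 0 ≤ f b) :
    (∏ b ∈ B, f b) ^ #A ≤ (∏ a ∈ A, f a) ^ #B := by
  calc (∏ b ∈ B, f b) ^ #A = ∏ _a ∈ A, ∏ b ∈ B, f b := (prod_const _).symm
    _ ≤ ∏ a ∈ A, ∏ _b ∈ B, f a :=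
      prod_le_prod (fun _ _ => prod_nonneg hB) fun a ha => prod_le_prod hB fun b hb => h a ha b hb
    _ = (∏ a ∈ A, f a) ^ #B := by rw [prod_comm, prod_const]

namespace AntitoneOn

variable {f : ℕ → R} {k : ℕ}

lemma prod_Ico_pow_le_prod_range_pow_sub_self (hf : AntitoneOn f (Set.Iio k))
    (h0 : ∀ j < k, 0 ≤ f j) {s : ℕ} (hsk : s ≤ k) :
    (∏ j ∈ Ico s k, f j) ^ s ≤ (∏ j ∈ range s, f j) ^ (k - s) := by
  simpa using prod_pow_card_le_prod_pow_card (A := range s) (B := Ico s k)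
    (fun a ha b hb => by
      simp only [mem_range, mem_Ico] at ha hb
      exact hf (Set.mem_Iio.2 (by omega)) (Set.mem_Iio.2 hb.2) (by omega))
    (fun b hb => h0 b (mem_Ico.1 hb).2)

lemma prod_range_pow_le_prod_range_pow (hf : AntitoneOn f (Set.Iio k))
    (h0 : ∀ j < k, 0 ≤ f j) {s : ℕ} (hsk : s ≤ k) :
    (∏ j ∈ range k, f j) ^ s ≤ (∏ j ∈ range s, f j) ^ k := by
  calc (∏ j ∈ range k, f j) ^ s
      = (∏ j ∈ range s, f j) ^ s * (∏ j ∈ Ico s k, f j) ^ s := by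
        rw [← prod_range_mul_prod_Ico f hsk, mul_pow]
    _ ≤ (∏ j ∈ range s, f j) ^ s * (∏ j ∈ range s, f j) ^ (k - s) := by
        gcongr
        · exact pow_nonneg (prod_nonneg fun j hj => h0 j ((mem_range.1 hj).trans_le hsk)) _
        · exact hf.prod_Ico_pow_le_prod_range_pow_sub_self h0 hsk
    _ = (∏ j ∈ range s, f j) ^ k := by rw [← pow_add, Nat.add_sub_cancel' hsk]

lemma prod_Ico_pow_le_prod_range_pow_sub (hf : AntitoneOn f (Set.Iio k))
    (h0 : ∀ j < k, 0 ≤ f j) {t : ℕ} (htk : t ≤ k) :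
    (∏ j ∈ Ico t k, f j) ^ k ≤ (∏ j ∈ range k, f j) ^ (k - t) := by
  calc (∏ j ∈ Ico t k, f j) ^ k
      = (∏ j ∈ Ico t k, f j) ^ t * (∏ j ∈ Ico t k, f j) ^ (k - t) := by
        rw [← pow_add, Nat.add_sub_cancel' htk]
    _ ≤ (∏ j ∈ range t, f j) ^ (k - t) * (∏ j ∈ Ico t k, f j) ^ (k - t) := by
        gcongr
        · exact pow_nonneg (prod_nonneg fun j hj => h0 j (mem_Ico.1 hj).2) _
        · exact hf.prod_Ico_pow_le_prod_range_pow_sub_self h0 htk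
    _ = (∏ j ∈ range k, f j) ^ (k - t) := by rw [← mul_pow, prod_range_mul_prod_Ico f htk]

lemma prod_Ico_pow_le_prod_range_pow (hf : AntitoneOn f (Set.Iio k))
    (h0 : ∀ j < k, 0 ≤ f j) {s t : ℕ} (hsk : s ≤ k) (htk : t ≤ k) :
    (∏ j ∈ Ico t k, f j) ^ s ≤ (∏ j ∈ range s, f j) ^ (k - t) := by
  rcases Nat.eq_zero_or_pos k with rfl | hk
  · obtain rfl : s = 0 := by omega
    simp
  have hP : 0 ≤ ∏ j ∈ range s, f j := prod_nonneg fun j hj => h0 j ((mem_range.1 hj).trans_le hsk)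
  refine le_of_pow_le_pow_left₀ hk.ne' (pow_nonneg hP _) ?_
  calc ((∏ j ∈ Ico t k, f j) ^ s) ^ k = ((∏ j ∈ Ico t k, f j) ^ k) ^ s := by
        rw [← pow_mul, ← pow_mul, mul_comm]
    _ ≤ ((∏ j ∈ range k, f j) ^ (k - t)) ^ s := by
        gcongr
        · exact pow_nonneg (prod_nonneg fun j hj => h0 j (mem_Ico.1 hj).2) _
        · exact hf.prod_Ico_pow_le_prod_range_pow_sub h0 htk
    _ = ((∏ j ∈ range k, f j) ^ s) ^ (k - t) := by rw [← pow_mul, ← pow_mul, mul_comm]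
    _ ≤ ((∏ j ∈ range s, f j) ^ k) ^ (k - t) := by
        gcongr
        · exact pow_nonneg (prod_nonneg fun j hj => h0 j (mem_range.1 hj)) _
        · exact hf.prod_range_pow_le_prod_range_pow h0 hsk
    _ = ((∏ j ∈ range s, f j) ^ (k - t)) ^ k := by rw [← pow_mul, ← pow_mul, mul_comm]

end AntitoneOn

end OrderedSemiring

lemma rpow_neg_div_le_prod {f : ℕ → ℝ} {k s t : ℕ} {r : ℝ} (hr : 0 < r)
    (hf : AntitoneOn f (Set.Iio k)) (h0 : ∀ j < k, 0 ≤ f j) (hsk : s ≤ k) (htk : t < k)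
    (h : 1 ≤ r * ∏ j ∈ Ico t k, f j) :
    r ^ (-(s : ℝ) / (k - t)) ≤ ∏ j ∈ range s, f j := by
  have hq : k - t ≠ 0 := by omega
  have hr' : r⁻¹ ≤ ∏ j ∈ Ico t k, f j := (inv_le_iff_one_le_mul₀' hr).2 h
  calc r ^ (-(s : ℝ) / (k - t)) = ((r⁻¹) ^ s) ^ (((k - t : ℕ) : ℝ)⁻¹) := by
        rw [Nat.cast_sub htk.le, inv_pow, ← Real.rpow_natCast, ← Real.rpow_neg hr.le,
          ← Real.rpow_mul hr.le, div_eq_mul_inv]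
    _ ≤ ((∏ j ∈ range s, f j) ^ (k - t)) ^ (((k - t : ℕ) : ℝ)⁻¹) := by
        gcongr
        exact (pow_le_pow_left₀ (by positivity) hr' s).trans
          (hf.prod_Ico_pow_le_prod_range_pow h0 hsk htk.le)
    _ = ∏ j ∈ range s, f j := Real.pow_rpow_inv_natCast
      (prod_nonneg fun j hj => h0 j ((mem_range.1 hj).trans_le hsk)) hq

lemma rpow_mul_choose_le_ringChoose {n k t s : ℕ} {r x : ℝ} (hr : 0 < r) (htk : t < k)
    (hsk : s ≤ k) (hkx : k ≤ x) (hxn : x ≤ n)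
    (h : n.choose k * Ring.choose x t ≤ r * n.choose t * Ring.choose x k) :
    r ^ (-(s : ℝ) / (k - t)) * n.choose s ≤ Ring.choose x s := by
  set f : ℕ → ℝ := fun j => (x - j) / (n - j)
  have hkn : k ≤ n := by exact_mod_cast hkx.trans hxn
  have hf0 : ∀ j < k, 0 < f j := fun j hj => by
    have : (j : ℝ) + 1 ≤ k := by exact_mod_cast hj
    exact div_pos (by linarith) (by linarith)
  have hf : AntitoneOn f (Set.Iio k) := fun i hi j hj hij => by
    have : (j : ℝ) + 1 ≤ k := by exact_mod_cast hj
    have : (i : ℝ) ≤ j := by exact_mod_cast hij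
    rw [div_le_div_iff₀ (by linarith) (by linarith)]
    nlinarith
  have hchoose : ∀ m ≤ k, Ring.choose x m = n.choose m * ∏ j ∈ range m, f j := by
    intro m hm
    rw [← Ring.choose_real_div_choose, mul_div_cancel₀]
    exact_mod_cast (Nat.choose_pos (hm.trans hkn)).ne'
  have hprod : ∏ j ∈ range k, f j = (∏ j ∈ range t, f j) * ∏ j ∈ Ico t k, f j :=
    (prod_range_mul_prod_Ico f htk.le).symm
  have hpos : 0 < (n.choose k : ℝ) * n.choose t * ∏ j ∈ range t, f j := by
    refine mul_pos (mul_pos ?_ ?_) (prod_pos fun j hj => hf0 j ?_)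
    · exact_mod_cast Nat.choose_pos hkn
    · exact_mod_cast Nat.choose_pos (htk.le.trans hkn)
    · rw [mem_range] at hj; omega
  have hQ : 1 ≤ r * ∏ j ∈ Ico t k, f j := by
    refine le_of_mul_le_mul_left ?_ hpos
    rw [hchoose t htk.le, hchoose k le_rfl, hprod] at h
    linarith
  rw [hchoose s hsk, mul_comm (n.choose s : ℝ)]
  gcongr
  exact rpow_neg_div_le_prod hr hf (fun j hj => (hf0 j hj).le) hsk htk hQ

/-! ### The Lovász form of the Kruskal–Katona theorem -/

namespace Finset

lemma UV.compress_singleton_of_notMem_of_mem {i j : ℕ} {s : Finset ℕ} (hi : i ∉ s)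
    (hj : j ∈ s) :
    UV.compress {i} {j} s = insert i (s.erase j) := by
  have hij : i ≠ j := fun h => hi (h ▸ hj)
  rw [UV.compress, if_pos ⟨disjoint_singleton_left.2 hi, singleton_subset_iff.2 hj⟩]
  ext a
  simp only [sup_eq_union, mem_sdiff, mem_union, mem_singleton, mem_insert, mem_erase]
  grind

lemma UV.sum_compress_lt {i j : ℕ} (hij : i < j) {s : Finset ℕ}
    (h : UV.compress {i} {j} s ≠ s) :
    ∑ a ∈ UV.compress {i} {j} s, a < ∑ a ∈ s, a := by
  have hij' : i ∉ s ∧ j ∈ s := by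
    by_contra hc
    refine h (if_neg ?_)
    simpa [disjoint_singleton_left] using hc
  rw [UV.compress_singleton_of_notMem_of_mem hij'.1 hij'.2,
    sum_insert fun hi => hij'.1 (mem_of_mem_erase hi), ← add_sum_erase s _ hij'.2]
  omega

lemma UV.sum_sum_compression_lt {i j : ℕ} (hij : i < j) {𝒜 : Finset (Finset ℕ)}
    (h : UV.compression {i} {j} 𝒜 ≠ 𝒜) :
    ∑ s ∈ UV.compression {i} {j} 𝒜, ∑ a ∈ s, a < ∑ s ∈ 𝒜, ∑ a ∈ s, a := by
  rw [UV.compression] at h ⊢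
  have hmoved : ∀ s ∈ {s ∈ 𝒜 | UV.compress {i} {j} s ∉ 𝒜}, UV.compress {i} {j} s ≠ s := by
    grind
  have hsplit :
      {s ∈ 𝒜 | UV.compress {i} {j} s ∈ 𝒜} ∪ {s ∈ 𝒜 | UV.compress {i} {j} s ∉ 𝒜} = 𝒜 :=
    filter_union_filter_not_eq _ _
  have hne : {s ∈ 𝒜 | UV.compress {i} {j} s ∉ 𝒜}.Nonempty := by
    contrapose! h
    rw [filter_image, h, image_empty, union_empty]
    rwa [h, union_empty] at hsplit
  rw [sum_union UV.compress_disjoint]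
  conv_rhs => rw [← hsplit]
  rw [sum_union (disjoint_filter_filter_not _ _ _), add_lt_add_iff_left, filter_image,
    sum_image UV.compress_injOn]
  exact sum_lt_sum_of_nonempty hne fun s hs => UV.sum_compress_lt hij (hmoved s hs)

variable {α : Type*} [DecidableEq α]

lemma card_memberSubfamily_add_card_shadow_le (a : α) (𝒜 : Finset (Finset α)) :
    #(𝒜.memberSubfamily a) + #(∂ (𝒜.memberSubfamily a)) ≤ #(∂ 𝒜) := by
  have hnon : 𝒜.memberSubfamily a ⊆ (∂ 𝒜).nonMemberSubfamily a := fun s hs => by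
    rw [mem_memberSubfamily] at hs
    exact mem_nonMemberSubfamily.2 ⟨mem_shadow_iff_insert_mem.2 ⟨a, hs.2, hs.1⟩, hs.2⟩
  have hmem : ∂ (𝒜.memberSubfamily a) ⊆ (∂ 𝒜).memberSubfamily a := fun s hs => by
    obtain ⟨b, hb, hbs⟩ := mem_shadow_iff_insert_mem.1 hs
    rw [mem_memberSubfamily, mem_insert, not_or] at hbs
    refine mem_memberSubfamily.2 ⟨mem_shadow_iff_insert_mem.2 ⟨b, ?_, ?_⟩, hbs.2.2⟩
    · rw [mem_insert, not_or]
      exact ⟨Ne.symm hbs.2.1, hb⟩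
    · rw [insert_comm]
      exact hbs.1
  calc #(𝒜.memberSubfamily a) + #(∂ (𝒜.memberSubfamily a))
      ≤ #((∂ 𝒜).nonMemberSubfamily a) + #((∂ 𝒜).memberSubfamily a) :=
        add_le_add (card_le_card hnon) (card_le_card hmem)
    _ = #(∂ 𝒜) := by rw [add_comm, card_memberSubfamily_add_card_nonMemberSubfamily]

lemma succ_le_card_shadow {m : ℕ} {𝒜 : Finset (Finset α)}
    (h𝒜 : (𝒜 : Set (Finset α)).Sized (m + 1)) (hne : 𝒜.Nonempty) :
    m + 1 ≤ #(∂ 𝒜) := by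
  obtain ⟨s, hs⟩ := hne
  have hsub : s.powersetCard m ⊆ ∂ 𝒜 := fun t ht => by
    rw [mem_powersetCard] at ht
    exact mem_shadow_iff_exists_mem_card_add_one.2 ⟨s, hs, ht.1, by rw [h𝒜 hs, ht.2]⟩
  simpa [card_powersetCard, h𝒜 hs] using card_le_card hsub

lemma _root_.Set.Sized.memberSubfamily {m : ℕ} {𝒜 : Finset (Finset α)}
    (h𝒜 : (𝒜 : Set (Finset α)).Sized (m + 1)) (a : α) :
    ((𝒜.memberSubfamily a : Finset (Finset α)) : Set (Finset α)).Sized m := fun s hs => by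
  rw [mem_coe, mem_memberSubfamily] at hs
  have := h𝒜 hs.1
  rw [card_insert_of_notMem hs.2] at this
  omega

def IsShifted (𝒜 : Finset (Finset ℕ)) : Prop :=
  ∀ ⦃i j : ℕ⦄, i < j → UV.IsCompressed {i} {j} 𝒜

variable {𝒜 : Finset (Finset ℕ)}

lemma IsShifted.insert_erase_mem (h : IsShifted 𝒜) {s : Finset ℕ} (hs : s ∈ 𝒜) {i j : ℕ}
    (hij : i < j) (hi : i ∉ s) (hj : j ∈ s) : insert i (s.erase j) ∈ 𝒜 := by
  have := UV.compress_mem_compression (u := {i}) (v := {j}) hs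
  rwa [(h hij).eq, UV.compress_singleton_of_notMem_of_mem hi hj] at this

lemma IsShifted.shadow_nonMemberSubfamily_subset (h : IsShifted 𝒜) :
    ∂ (𝒜.nonMemberSubfamily 0) ⊆ 𝒜.memberSubfamily 0 := fun t ht => by
  obtain ⟨s, hs, a, ha, rfl⟩ := mem_shadow_iff.1 ht
  rw [mem_nonMemberSubfamily] at hs
  have ha0 : 0 < a := Nat.pos_of_ne_zero fun h => hs.2 (h ▸ ha)
  exact mem_memberSubfamily.2
    ⟨h.insert_erase_mem hs.1 ha0 hs.2 ha, fun h0 => hs.2 (mem_of_mem_erase h0)⟩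

lemma IsShifted.memberSubfamily_nonempty (h : IsShifted 𝒜) {m : ℕ}
    (h𝒜 : (𝒜 : Set (Finset ℕ)).Sized (m + 1)) (hne : 𝒜.Nonempty) :
    (𝒜.memberSubfamily 0).Nonempty := by
  obtain ⟨s, hs⟩ := hne
  by_cases h0 : 0 ∈ s
  · exact ⟨s.erase 0, mem_memberSubfamily.2 ⟨by rwa [insert_erase h0], notMem_erase 0 s⟩⟩
  · obtain ⟨a, ha⟩ := card_pos.1 (by rw [h𝒜 hs]; exact m.succ_pos)
    exact ⟨s.erase a, h.shadow_nonMemberSubfamily_subset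
      (erase_mem_shadow (mem_nonMemberSubfamily.2 ⟨hs, h0⟩) ha)⟩

theorem exists_isShifted {m : ℕ} (𝒜 : Finset (Finset ℕ))
    (h𝒜 : (𝒜 : Set (Finset ℕ)).Sized m) :
    ∃ ℬ : Finset (Finset ℕ), #ℬ = #𝒜 ∧ #(∂ ℬ) ≤ #(∂ 𝒜) ∧
      (ℬ : Set (Finset ℕ)).Sized m ∧ IsShifted ℬ := by
  by_cases hshift : IsShifted 𝒜
  · exact ⟨𝒜, rfl, le_rfl, h𝒜, hshift⟩
  obtain ⟨i, j, hij, hne⟩ : ∃ i j, i < j ∧ UV.compression {i} {j} 𝒜 ≠ 𝒜 := by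
    simpa [IsShifted, UV.IsCompressed] using hshift
  obtain ⟨ℬ, hcard, hshadow, hℬ, hℬshift⟩ :=
    exists_isShifted (UV.compression {i} {j} 𝒜) (h𝒜.uvCompression (by simp))
  refine ⟨ℬ, hcard.trans (UV.card_compression _ _ _), hshadow.trans ?_, hℬ, hℬshift⟩
  exact UV.card_shadow_compression_le _ _ fun x hx =>
    ⟨j, mem_singleton_self j, by simp [(mem_singleton.1 hx), UV.isCompressed_self]⟩
termination_by ∑ s ∈ 𝒜, ∑ a ∈ s, a
decreasing_by exact UV.sum_sum_compression_lt hij hne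

/-- Were the link of `0` small, the subfamily avoiding `0` would be large, and so would its shadow,
which shiftedness puts inside the link. -/
lemma IsShifted.ringChoose_le_card_memberSubfamily (hshift : IsShifted 𝒜) {m : ℕ}
    (h𝒜 : (𝒜 : Set (Finset ℕ)).Sized (m + 2)) {x : ℝ} (hx : (m + 2 : ℝ) ≤ x)
    (hc : Ring.choose x (m + 2) ≤ #𝒜)
    (ih : ∀ ℬ : Finset (Finset ℕ), (ℬ : Set (Finset ℕ)).Sized (m + 2) → #ℬ < #𝒜 →
      ∀ y : ℝ, (m + 2 : ℝ) ≤ y → Ring.choose y (m + 2) ≤ #ℬ →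
        Ring.choose y (m + 1) ≤ #(∂ ℬ)) :
    Ring.choose (x - 1) (m + 1) ≤ #(𝒜.memberSubfamily 0) := by
  set N := 𝒜.nonMemberSubfamily 0
  by_contra! hlt
  have hN : (N : Set (Finset ℕ)).Sized (m + 2) := fun s hs =>
    h𝒜 (mem_nonMemberSubfamily.1 hs).1
  have hsplit : #(𝒜.memberSubfamily 0) + #N = #𝒜 :=
    card_memberSubfamily_add_card_nonMemberSubfamily 0 𝒜
  have hNbig : Ring.choose (x - 1) (m + 2) < #N := by
    have : (#(𝒜.memberSubfamily 0) : ℝ) + #N = #𝒜 := by exact_mod_cast hsplit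
    linarith [Ring.choose_real_pascal x (m + 1)]
  have hshadowN : (#(∂ N) : ℝ) ≤ #(𝒜.memberSubfamily 0) := by
    exact_mod_cast card_le_card hshift.shadow_nonMemberSubfamily_subset
  rcases le_or_gt (m + 2 : ℝ) (x - 1) with hx1 | hx1
  · have h𝒜ne : 𝒜.Nonempty := by
      rw [← card_pos, ← Nat.cast_pos (α := ℝ)]
      exact (Ring.choose_real_pos (by push_cast; linarith)).trans_le hc
    have hNlt : #N < #𝒜 := by
      have := (hshift.memberSubfamily_nonempty h𝒜 h𝒜ne).card_pos
      omega
    linarith [ih N hN hNlt (x - 1) hx1 hNbig.le]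
  · have hNne : N.Nonempty := by
      rw [← card_pos, ← Nat.cast_pos (α := ℝ)]
      refine lt_of_le_of_lt (Ring.choose_real_nonneg ?_) hNbig
      push_cast; linarith
    have hle : Ring.choose (x - 1) (m + 1) ≤ ((m + 2 : ℕ) : ℝ) := by
      have := Ring.choose_real_le_choose (m := m + 1) (x := x - 1) (y := ((m + 2 : ℕ) : ℝ))
        (by push_cast; linarith) (by push_cast; linarith)
      rwa [Ring.choose_natCast, Nat.choose_succ_self_right] at this
    have := succ_le_card_shadow hN hNne
    have : ((m + 2 : ℕ) : ℝ) ≤ #(∂ N) := by exact_mod_cast this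
    linarith

/-- Induction on `m` and `|𝒜|` after shifting `𝒜`: the link of `0` is large by the previous
lemma, and it is disjoint from the copy of its own shadow with `0` added, both lying in `∂ 𝒜`. -/
theorem ringChoose_le_card_shadow {m : ℕ} {𝒜 : Finset (Finset ℕ)}
    (h𝒜 : (𝒜 : Set (Finset ℕ)).Sized (m + 1)) {x : ℝ} (hx : (m + 1 : ℝ) ≤ x)
    (hc : Ring.choose x (m + 1) ≤ #𝒜) : Ring.choose x m ≤ #(∂ 𝒜) := by
  obtain ⟨ℬ, hcard, hshadow, hℬ, hshift⟩ := exists_isShifted 𝒜 h𝒜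
  refine le_trans ?_ (Nat.cast_le.2 hshadow)
  rw [← hcard] at hc
  have hne : ℬ.Nonempty := by
    rw [← card_pos, ← Nat.cast_pos (α := ℝ)]
    exact (Ring.choose_real_pos (by push_cast; linarith)).trans_le hc
  match hm : m with
  | 0 =>
    obtain ⟨s, hs⟩ := hne
    obtain ⟨a, ha⟩ := card_pos.1 (by rw [hℬ hs]; exact Nat.one_pos)
    rw [Ring.choose_zero_right, Nat.one_le_cast]
    exact card_pos.2 ⟨_, erase_mem_shadow hs ha⟩
  | m + 1 =>
    have hLbound := hshift.ringChoose_le_card_memberSubfamily hℬ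
      (by push_cast at hx ⊢; linarith) hc
      fun 𝒞 h𝒞 hlt y hy hcy => ringChoose_le_card_shadow h𝒞 (by push_cast; linarith) hcy
    have hrec := ringChoose_le_card_shadow (hℬ.memberSubfamily 0)
      (by push_cast at hx ⊢; linarith) hLbound
    have hsum : (#(ℬ.memberSubfamily 0) : ℝ) + #(∂ (ℬ.memberSubfamily 0)) ≤ #(∂ ℬ) := by
      exact_mod_cast card_memberSubfamily_add_card_shadow_le 0 ℬ
    linarith [Ring.choose_real_pascal x m]
termination_by (m, #𝒜)
decreasing_by
  · exact hm ▸ Prod.Lex.right _ (hcard ▸ hlt)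
  · exact hm ▸ Prod.Lex.left _ _ m.lt_succ_self

theorem ringChoose_le_card_shadow_iterate {j i : ℕ} {𝒜 : Finset (Finset ℕ)}
    (h𝒜 : (𝒜 : Set (Finset ℕ)).Sized (j + i)) {x : ℝ} (hx : ((j + i : ℕ) : ℝ) ≤ x)
    (hc : Ring.choose x (j + i) ≤ #𝒜) : Ring.choose x j ≤ #(∂^[i] 𝒜) := by
  induction i generalizing j with
  | zero => simpa using hc
  | succ i ih =>
    rw [Function.iterate_succ_apply']
    have hsized : ((∂^[i] 𝒜 : Finset (Finset ℕ)) : Set (Finset ℕ)).Sized (j + 1) := by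
      have := h𝒜.shadow_iterate (k := i)
      rwa [show j + (i + 1) - i = j + 1 by omega] at this
    rw [← add_assoc, add_right_comm] at h𝒜 hx hc
    exact ringChoose_le_card_shadow hsized (by push_cast at hx; linarith) (ih h𝒜 hx hc)

variable {α β : Type*} [DecidableEq α] [DecidableEq β]

lemma shadow_map (f : α ↪ β) (𝒜 : Finset (Finset α)) :
    ∂ (𝒜.map (mapEmbedding f).toEmbedding) = (∂ 𝒜).map (mapEmbedding f).toEmbedding := by
  ext t
  simp only [mem_shadow_iff, mem_map, RelEmbedding.coe_toEmbedding, mapEmbedding_apply]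
  constructor
  · rintro ⟨_, ⟨s, hs, rfl⟩, b, hb, rfl⟩
    obtain ⟨a, ha, rfl⟩ := mem_map.1 hb
    exact ⟨s.erase a, ⟨s, hs, a, ha, rfl⟩, map_erase f s a⟩
  · rintro ⟨_, ⟨s, hs, a, ha, rfl⟩, rfl⟩
    exact ⟨s.map f, ⟨s, hs, rfl⟩, f a, mem_map_of_mem f ha, (map_erase f s a).symm⟩

lemma card_shadow_iterate_map (f : α ↪ β) (𝒜 : Finset (Finset α)) (i : ℕ) :
    #(∂^[i] (𝒜.map (mapEmbedding f).toEmbedding)) = #(∂^[i] 𝒜) := by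
  suffices ∂^[i] (𝒜.map (mapEmbedding f).toEmbedding) =
      (∂^[i] 𝒜).map (mapEmbedding f).toEmbedding by
    rw [this, card_map]
  induction i with
  | zero => rfl
  | succ i ih => rw [Function.iterate_succ_apply', Function.iterate_succ_apply', ih, shadow_map]

lemma hShadow_eq_shadow_iterate {m j : ℕ} (hj : j ≤ m) {𝒜 : Finset (Finset α)}
    (h𝒜 : (𝒜 : Set (Finset α)).Sized m) : hShadow j 𝒜 = ∂^[m - j] 𝒜 := by
  ext t
  rw [mem_shadow_iterate_iff_exists_sdiff]
  simp only [hShadow, mem_biUnion, mem_powersetCard]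
  refine exists_congr fun s => and_congr_right fun hs => and_congr_right fun hts => ?_
  rw [card_sdiff_of_subset hts, h𝒜 hs]
  have := card_le_card hts
  rw [h𝒜 hs] at this
  omega

theorem ringChoose_le_card_hShadow [Countable α] {m j : ℕ} (hj : j ≤ m)
    {𝒜 : Finset (Finset α)} (h𝒜 : (𝒜 : Set (Finset α)).Sized m) {x : ℝ} (hx : (m : ℝ) ≤ x)
    (hc : Ring.choose x m ≤ #𝒜) : Ring.choose x j ≤ #(hShadow j 𝒜) := by
  obtain ⟨f, hf⟩ := Countable.exists_injective_nat α
  set ℬ := 𝒜.map (mapEmbedding ⟨f, hf⟩).toEmbedding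
  have hℬ : (ℬ : Set (Finset ℕ)).Sized (j + (m - j)) := by
    rw [Nat.add_sub_cancel' hj]
    intro t ht
    obtain ⟨s, hs, rfl⟩ := mem_map.1 (mem_coe.1 ht)
    simpa using h𝒜 hs
  rw [hShadow_eq_shadow_iterate hj h𝒜, ← card_shadow_iterate_map ⟨f, hf⟩]
  refine ringChoose_le_card_shadow_iterate hℬ ?_ ?_
  · rwa [Nat.add_sub_cancel' hj]
  · rwa [Nat.add_sub_cancel' hj, card_map]

end Finset

/-! ### Tight components -/

section TightComponent

variable {V : Type*} [DecidableEq V] {t : ℕ} {H : Finset (Finset V)} {e f : Finset V}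

lemma mem_tightComponent : f ∈ tightComponent t H e ↔ f ∈ H ∧ TightConn t H e f := by
  classical
  simp only [tightComponent, mem_filter]

lemma tightComponent_subset : tightComponent t H e ⊆ H := fun _ hf =>
  (mem_tightComponent.1 hf).1

lemma self_mem_tightComponent (he : e ∈ H) : e ∈ tightComponent t H e :=
  mem_tightComponent.2 ⟨he, Relation.ReflTransGen.refl⟩

instance : Std.Symm (TightStep t H) :=
  ⟨fun _ _ ⟨ha, hb, hab⟩ => ⟨hb, ha, by rwa [inter_comm]⟩⟩

lemma TightConn.symm (h : TightConn t H e f) : TightConn t H f e :=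
  Relation.ReflTransGen.stdSymm.symm _ _ h

lemma tightComponent_eq_of_mem (hf : f ∈ tightComponent t H e) :
    tightComponent t H f = tightComponent t H e := by
  have hef := (mem_tightComponent.1 hf).2
  ext g
  simp only [mem_tightComponent]
  exact and_congr_right fun _ => ⟨hef.trans, hef.symm.trans⟩

lemma tightComponent_eq_of_le_card_inter {a b : Finset V} (ha : a ∈ tightComponent t H e)
    (hb : b ∈ tightComponent t H f) (hab : t ≤ #(a ∩ b)) :
    tightComponent t H e = tightComponent t H f := by
  have hstep : b ∈ tightComponent t H a := mem_tightComponent.2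
    ⟨tightComponent_subset hb,
      .single ⟨tightComponent_subset ha, tightComponent_subset hb, hab⟩⟩
  rw [← tightComponent_eq_of_mem ha, ← tightComponent_eq_of_mem hb,
    tightComponent_eq_of_mem hstep]

lemma disjoint_hShadow_tightComponent
    (hne : tightComponent t H e ≠ tightComponent t H f) :
    Disjoint (hShadow t (tightComponent t H e)) (hShadow t (tightComponent t H f)) := by
  refine disjoint_left.2 fun T hTe hTf => hne ?_
  simp only [hShadow, mem_biUnion, mem_powersetCard] at hTe hTf
  obtain ⟨a, ha, hTa, hT⟩ := hTe
  obtain ⟨b, hb, hTb, -⟩ := hTf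
  exact tightComponent_eq_of_le_card_inter ha hb (hT ▸ card_le_card (subset_inter hTa hTb))

lemma sum_card_tightComponent : ∑ C ∈ H.image (tightComponent t H), #C = #H := by
  rw [card_eq_sum_card_image (tightComponent t H) H]
  refine sum_congr rfl fun C hC => ?_
  obtain ⟨e, he, rfl⟩ := mem_image.1 hC
  congr 1
  ext f
  rw [mem_filter]
  exact ⟨fun h => ⟨tightComponent_subset h, tightComponent_eq_of_mem h⟩,
    fun h => h.2 ▸ self_mem_tightComponent h.1⟩

lemma sum_card_hShadow_tightComponent_le [Fintype V] :
    ∑ C ∈ H.image (tightComponent t H), #(hShadow t C) ≤ (Fintype.card V).choose t := by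
  have hdisj : (↑(H.image (tightComponent t H)) : Set (Finset (Finset V))).PairwiseDisjoint
      (hShadow t) := by
    rintro _ hC _ hD hne
    obtain ⟨e, -, rfl⟩ := mem_image.1 hC
    obtain ⟨f, -, rfl⟩ := mem_image.1 hD
    exact disjoint_hShadow_tightComponent hne
  have hsub : (H.image (tightComponent t H)).biUnion (hShadow t) ⊆ univ.powersetCard t := by
    intro T hT
    simp only [hShadow, mem_biUnion, mem_powersetCard] at hT
    obtain ⟨-, -, -, -, -, hT⟩ := hT
    exact mem_powersetCard.2 ⟨subset_univ T, hT⟩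
  rw [← card_biUnion hdisj, ← card_univ, ← card_powersetCard]
  exact card_le_card hsub

lemma exists_card_mul_card_hShadow_tightComponent_le [Fintype V] (hH : H.Nonempty) :
    ∃ e ∈ H, #H * #(hShadow t (tightComponent t H e)) ≤
      (Fintype.card V).choose t * #(tightComponent t H e) := by
  have hsum : ∑ C ∈ H.image (tightComponent t H), #H * #(hShadow t C) ≤
      ∑ C ∈ H.image (tightComponent t H), (Fintype.card V).choose t * #C := by
    rw [← mul_sum, ← mul_sum, sum_card_tightComponent, mul_comm]
    exact Nat.mul_le_mul_right _ sum_card_hShadow_tightComponent_le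
  obtain ⟨C, hC, hle⟩ := exists_le_of_sum_le (hH.image _) hsum
  obtain ⟨e, he, rfl⟩ := mem_image.1 hC
  exact ⟨e, he, hle⟩

end TightComponent

/-! ### Colourings -/

section Coloring

variable {n r k : ℕ} {c : Finset (Fin n) → Fin r}

lemma sized_tightComponent_colorClass {t : ℕ} {i : Fin r} {e : Finset (Fin n)} :
    ((tightComponent t (colorClass n r k c i) e : Finset (Finset (Fin n))) :
      Set (Finset (Fin n))).Sized k := fun _ hf =>
  (mem_powersetCard.1 (mem_filter.1 (tightComponent_subset hf)).1).2

lemma card_tightComponent_colorClass_le {t : ℕ} {i : Fin r} {e : Finset (Fin n)} :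
    #(tightComponent t (colorClass n r k c i) e) ≤ n.choose k := by
  simpa using card_le_card (tightComponent_subset.trans (filter_subset _ _) :
    tightComponent t (colorClass n r k c i) e ⊆ univ.powersetCard k)

lemma sum_card_colorClass : ∑ i, #(colorClass n r k c i) = n.choose k := by
  have := card_eq_sum_card_fiberwise (s := univ.powersetCard k) fun e _ => mem_univ (c e)
  rwa [card_powersetCard, card_univ, Fintype.card_fin, eq_comm] at this

lemma exists_choose_le_mul_card_colorClass (hr : 0 < r) :
    ∃ i, n.choose k ≤ r * #(colorClass n r k c i) := by
  have : ∑ _i : Fin r, n.choose k ≤ ∑ i, r * #(colorClass n r k c i) := by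
    rw [← mul_sum, sum_card_colorClass, sum_const, card_univ, Fintype.card_fin, smul_eq_mul]
  obtain ⟨i, -, hi⟩ := exists_le_of_sum_le ⟨⟨0, hr⟩, mem_univ _⟩ this
  exact ⟨i, hi⟩

lemma exists_tightComponent_choose_mul_card_hShadow_le (hr : 0 < r) (hkn : k ≤ n) (t : ℕ)
    (c : Finset (Fin n) → Fin r) :
    ∃ i, ∃ e ∈ colorClass n r k c i,
      n.choose k * #(hShadow t (tightComponent t (colorClass n r k c i) e)) ≤
        r * n.choose t * #(tightComponent t (colorClass n r k c i) e) := by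
  obtain ⟨i, hi⟩ := exists_choose_le_mul_card_colorClass (k := k) (c := c) hr
  have hne : (colorClass n r k c i).Nonempty := by
    rw [← card_pos]
    exact Nat.pos_of_mul_pos_left ((Nat.choose_pos hkn).trans_le hi)
  obtain ⟨e, he, hle⟩ := exists_card_mul_card_hShadow_tightComponent_le (t := t) hne
  rw [Fintype.card_fin] at hle
  refine ⟨i, e, he, ?_⟩
  set H := colorClass n r k c i
  set C := tightComponent t H e
  calc n.choose k * #(hShadow t C) ≤ r * #H * #(hShadow t C) := Nat.mul_le_mul_right _ hi
    _ = r * (#H * #(hShadow t C)) := mul_assoc _ _ _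
    _ ≤ r * (n.choose t * #C) := Nat.mul_le_mul_left _ hle
    _ = r * n.choose t * #C := (mul_assoc _ _ _).symm

lemma card_hShadow_tightComponent_le_Mcol {t s : ℕ} {i : Fin r} {e : Finset (Fin n)}
    (he : e ∈ colorClass n r k c i) :
    #(hShadow s (tightComponent t (colorClass n r k c i) e)) ≤ Mcol n r k t s c :=
  le_sup_of_le (mem_univ i) (le_sup (f := fun e =>
    #(hShadow s (tightComponent t (colorClass n r k c i) e))) he)

lemma exists_Mcol_eq_Mmin (hr : 0 < r) (t s : ℕ) : ∃ c, Mcol n r k t s c = Mmin n r k t s :=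
  Nat.sInf_mem (s := {m | ∃ c : Finset (Fin n) → Fin r, Mcol n r k t s c = m})
    ⟨_, fun _ => ⟨0, hr⟩, rfl⟩

end Coloring

theorem statement0_general (k t s r n : ℕ)
    (hr : 2 ≤ r) (hmax : max (t + 1) s ≤ k) (hkn : k ≤ n) :
    (r : ℝ) ^ (-(s : ℝ) / ((k : ℝ) - (t : ℝ))) * (n.choose s : ℝ) ≤
      (Mmin n r k t s : ℝ) := by
  have htk : t < k := by omega
  have hsk : s ≤ k := by omega
  obtain ⟨c, hc⟩ := exists_Mcol_eq_Mmin (k := k) (by omega : 0 < r) t s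
  obtain ⟨i, e, he, hratio⟩ :=
    exists_tightComponent_choose_mul_card_hShadow_le (by omega) hkn t c
  set C := tightComponent t (colorClass n r k c i) e
  have hCpos : 1 ≤ #C := card_pos.2 ⟨e, self_mem_tightComponent he⟩
  obtain ⟨x, ⟨hkx, hxn⟩, hx⟩ := exists_ringChoose_eq hkn (c := #C) (by exact_mod_cast hCpos)
    (by exact_mod_cast card_tightComponent_colorClass_le)
  have hshadow : ∀ j ≤ k, Ring.choose x j ≤ #(hShadow j C) := fun j hj =>
    ringChoose_le_card_hShadow hj sized_tightComponent_colorClass hkx hx.le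
  have hkey : (n.choose k : ℝ) * Ring.choose x t ≤ r * n.choose t * Ring.choose x k :=
    calc (n.choose k : ℝ) * Ring.choose x t ≤ n.choose k * #(hShadow t C) := by
          gcongr; exact hshadow t htk.le
      _ ≤ r * n.choose t * #C := by exact_mod_cast hratio
      _ = r * n.choose t * Ring.choose x k := by rw [hx]
  rw [← hc]
  calc (r : ℝ) ^ (-(s : ℝ) / ((k : ℝ) - (t : ℝ))) * (n.choose s : ℝ)
      ≤ Ring.choose x s := rpow_mul_choose_le_ringChoose (by positivity) htk hsk hkx hxn hkey
    _ ≤ #(hShadow s C) := hshadow s hsk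
    _ ≤ Mcol n r k t s c := by exact_mod_cast card_hShadow_tightComponent_le_Mcol he

/-- **Theorem (Lower bound).** For all positive integers `k,t,s,r,n` with
`max (t+1) s ≤ k ≤ n` and `r ≥ 2`, `M(n,r,k,t,s) ≥ r^(-s/(k-t)) * C(n,s)`. -/
theorem statement0 (k t s r n : ℕ) (hk : 0 < k) (ht : 0 < t) (hs : 0 < s)
    (hr : 2 ≤ r) (hn : 0 < n) (hmax : max (t + 1) s ≤ k) (hkn : k ≤ n) :
    (r : ℝ) ^ (-(s : ℝ) / ((k : ℝ) - (t : ℝ))) * (n.choose s : ℝ) ≤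
      (Mmin n r k t s : ℝ) :=
  statement0_general k t s r n hr hmax hkn
end

section
/- Let n, k, t, s be positive integers such that max(t+1, s) ≤ k ≤ n and 2·max(t,s) ≤ k. Then in every 2-coloring of the edges of K^k_n there is a monochromatic t-tight component C such that E^(s)(C) consists of all s-element subsets of the vertex set; in particular M(n,2,k,t,s) = C(n,s). -/
open Finset

/-! Fix `m = max t s`. Call two `m`-sets linked in a color when some edge of that color contains
both. As `2m ≤ k ≤ n`, any two `m`-sets are linked in some color, so the link graphs of the two
colors together form a complete graph, and one of them is connected (a graph or its complement is
connected). A path of linked `m`-sets lifts to a chain of edges of that color, consecutive ones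
sharing an `m`-set, hence at least `t` vertices; so the tight component of an edge containing an
`m`-set contains an edge through every `m`-set, and therefore through every `s`-set. -/

section LinkGraph

variable {V : Type*} [DecidableEq V]

def linkGraph (H : Finset (Finset V)) (m : ℕ) : SimpleGraph (Set.powersetCard V m) :=
  SimpleGraph.fromRel fun A B => ∃ g ∈ H, (A : Finset V) ∪ B ⊆ g

lemma exists_tightConn_of_reachable {t m : ℕ} {H : Finset (Finset V)} (htm : t ≤ m)
    {A B : Set.powersetCard V m} (hAB : (linkGraph H m).Reachable A B)
    {e : Finset V} (he : e ∈ H) (hAe : (A : Finset V) ⊆ e) :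
    ∃ f ∈ H, (B : Finset V) ⊆ f ∧ TightConn t H e f := by
  rw [SimpleGraph.reachable_iff_reflTransGen] at hAB
  induction hAB with
  | refl => exact ⟨e, he, hAe, .refl⟩
  | @tail B C _ hBC ih =>
    obtain ⟨f, hf, hBf, hef⟩ := ih
    obtain ⟨g, hg, hBCg⟩ : ∃ g ∈ H, (B : Finset V) ∪ C ⊆ g := by
      rcases hBC.2 with h | ⟨g, hg, hCBg⟩
      · exact h
      · exact ⟨g, hg, union_comm (C : Finset V) B ▸ hCBg⟩
    have hfg : t ≤ (f ∩ g).card := calc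
      t ≤ m := htm
      _ = (B : Finset V).card := B.2.symm
      _ ≤ (f ∩ g).card := card_le_card (subset_inter hBf (subset_union_left.trans hBCg))
    exact ⟨g, hg, subset_union_right.trans hBCg, hef.tail ⟨hf, hg, hfg⟩⟩

lemma hShadow_subset_powersetCard_univ [Fintype V] (s : ℕ) (H : Finset (Finset V)) :
    hShadow s H ⊆ univ.powersetCard s := by
  intro T hT
  obtain ⟨_, _, hTs⟩ := mem_biUnion.mp hT
  exact mem_powersetCard_univ.mpr (mem_powersetCard.mp hTs).2

lemma hShadow_tightComponent_eq_of_preconnected [Fintype V] {t s m : ℕ}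
    {H : Finset (Finset V)} (htm : t ≤ m) (hsm : s ≤ m) (hconn : (linkGraph H m).Preconnected)
    {A : Set.powersetCard V m} {e : Finset V} (he : e ∈ H) (hAe : (A : Finset V) ⊆ e) :
    hShadow s (tightComponent t H e) = univ.powersetCard s := by
  refine (hShadow_subset_powersetCard_univ s _).antisymm fun T hT => ?_
  have hTs : T.card = s := mem_powersetCard_univ.mp hT
  have hmV : m ≤ (univ : Finset V).card := A.2 ▸ card_le_univ (A : Finset V)
  obtain ⟨B, hTB, -, hBm⟩ := exists_subsuperset_card_eq (subset_univ T) (hTs ▸ hsm) hmV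
  obtain ⟨f, hf, hBf, hef⟩ :=
    exists_tightConn_of_reachable htm (hconn A ⟨B, hBm⟩) he hAe
  have hfC : f ∈ tightComponent t H e := by
    classical
    exact mem_filter.mpr ⟨hf, hef⟩
  exact mem_biUnion.mpr ⟨f, hfC, mem_powersetCard.mpr ⟨hTB.trans hBf, hTs⟩⟩

end LinkGraph

lemma exists_linkGraph_colorClass_adj {n r k m : ℕ} (h2m : 2 * m ≤ k) (hkn : k ≤ n)
    (c : Finset (Fin n) → Fin r) {A B : Set.powersetCard (Fin n) m} (hAB : A ≠ B) :
    ∃ i, (linkGraph (colorClass n r k c i) m).Adj A B := by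
  have hAB_card : ((A : Finset (Fin n)) ∪ B).card ≤ k := calc
    _ ≤ (A : Finset (Fin n)).card + (B : Finset (Fin n)).card := card_union_le _ _
    _ = 2 * m := by rw [A.2, B.2, two_mul]
    _ ≤ k := h2m
  obtain ⟨g, hABg, -, hg⟩ :=
    exists_subsuperset_card_eq (subset_univ _) hAB_card (by simpa using hkn)
  exact ⟨c g, hAB, .inl ⟨g, mem_filter.mpr ⟨mem_powersetCard_univ.mpr hg, rfl⟩, hABg⟩⟩

lemma exists_preconnected_linkGraph_colorClass {n k m : ℕ} (h2m : 2 * m ≤ k) (hkn : k ≤ n)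
    (c : Finset (Fin n) → Fin 2) :
    ∃ i, (linkGraph (colorClass n 2 k c i) m).Preconnected := by
  rcases (linkGraph (colorClass n 2 k c 0) m).connected_or_preconnected_compl with h | h
  · exact ⟨0, h.preconnected⟩
  refine ⟨1, h.mono fun A B hAB => ?_⟩
  obtain ⟨hne, hA0⟩ := (SimpleGraph.compl_adj _ _ _).mp hAB
  obtain ⟨i, hi⟩ := exists_linkGraph_colorClass_adj h2m hkn c hne
  fin_cases i
  · exact absurd hi hA0
  · exact hi

theorem exists_colorClass_hShadow_tightComponent_eq {n k t s : ℕ} (ht : 0 < t) (hkn : k ≤ n)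
    (h2 : 2 * max t s ≤ k) (c : Finset (Fin n) → Fin 2) :
    ∃ i : Fin 2, ∃ e ∈ colorClass n 2 k c i,
      hShadow s (tightComponent t (colorClass n 2 k c i) e) = univ.powersetCard s := by
  have : Nontrivial (Set.powersetCard (Fin n) (max t s)) :=
    Set.powersetCard.nontrivial' (by omega)
      (by rw [Nat.card_eq_fintype_card, Fintype.card_fin]; omega)
  obtain ⟨i, hconn⟩ := exists_preconnected_linkGraph_colorClass h2 hkn c
  obtain ⟨A⟩ : Nonempty (Set.powersetCard (Fin n) (max t s)) := inferInstance
  obtain ⟨B, -, hAB⟩ := hconn.exists_adj_of_nontrivial A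
  obtain ⟨g, hg, hABg⟩ : ∃ g ∈ colorClass n 2 k c i, (A : Finset (Fin n)) ⊆ g := by
    rcases hAB with ⟨g, hg, h⟩ | ⟨g, hg, h⟩
    · exact ⟨g, hg, subset_union_left.trans h⟩
    · exact ⟨g, hg, subset_union_right.trans h⟩
  exact ⟨i, g, hg,
    hShadow_tightComponent_eq_of_preconnected (le_max_left t s) (le_max_right t s) hconn hg hABg⟩

lemma Mcol_le_choose (n r k t s : ℕ) (c : Finset (Fin n) → Fin r) :
    Mcol n r k t s c ≤ n.choose s :=
  Finset.sup_le fun i _ => Finset.sup_le fun e _ => by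
    simpa using card_le_card (hShadow_subset_powersetCard_univ s
      (tightComponent t (colorClass n r k c i) e))

lemma Mcol_eq_choose_of_hShadow_eq {n r k t s : ℕ} {c : Finset (Fin n) → Fin r} {i : Fin r}
    {e : Finset (Fin n)} (he : e ∈ colorClass n r k c i)
    (hC : hShadow s (tightComponent t (colorClass n r k c i) e) = univ.powersetCard s) :
    Mcol n r k t s c = n.choose s := by
  refine (Mcol_le_choose n r k t s c).antisymm ?_
  calc n.choose s = (hShadow s (tightComponent t (colorClass n r k c i) e)).card := by simp [hC]
    _ ≤ (colorClass n r k c i).sup fun e =>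
          (hShadow s (tightComponent t (colorClass n r k c i) e)).card :=
      le_sup (f := fun e => (hShadow s (tightComponent t (colorClass n r k c i) e)).card) he
    _ ≤ Mcol n r k t s c :=
      le_sup (f := fun i : Fin r => (colorClass n r k c i).sup fun e =>
        (hShadow s (tightComponent t (colorClass n r k c i) e)).card) (mem_univ i)

theorem statement3_general (n k t s : ℕ) (ht : 0 < t) (hkn : k ≤ n)
    (h2 : 2 * max t s ≤ k) :
    (∀ c : Finset (Fin n) → Fin 2, ∃ i : Fin 2, ∃ e ∈ colorClass n 2 k c i,
      hShadow s (tightComponent t (colorClass n 2 k c i) e) =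
        Finset.univ.powersetCard s) ∧
    Mmin n 2 k t s = n.choose s := by
  have hmono := exists_colorClass_hShadow_tightComponent_eq ht hkn h2
  refine ⟨hmono, ?_⟩
  have hMcol : (fun c => Mcol n 2 k t s c) = fun _ => n.choose s := funext fun c => by
    obtain ⟨i, e, he, hC⟩ := hmono c
    exact Mcol_eq_choose_of_hShadow_eq he hC
  change sInf (Set.range fun c => Mcol n 2 k t s c) = _
  rw [hMcol, Set.range_const, csInf_singleton]

/-- **Theorem (two colors, part (a)).** If `max (t+1) s ≤ k ≤ n` and
`2 * max t s ≤ k`, then in every 2-coloring of `K^k_n` there is a monochromatic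
`t`-tight component `C` whose `s`-shadow consists of all `s`-subsets of the vertex
set; in particular `M(n,2,k,t,s) = C(n,s)`. -/
theorem statement3 (n k t s : ℕ) (hk : 0 < k) (ht : 0 < t) (hs : 0 < s)
    (hn : 0 < n) (hmax : max (t + 1) s ≤ k) (hkn : k ≤ n)
    (h2 : 2 * max t s ≤ k) :
    (∀ c : Finset (Fin n) → Fin 2, ∃ i : Fin 2, ∃ e ∈ colorClass n 2 k c i,
      hShadow s (tightComponent t (colorClass n 2 k c i) e) =
        Finset.univ.powersetCard s) ∧
    Mmin n 2 k t s = n.choose s :=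
  statement3_general n k t s ht hkn h2
end

section
/- For every integer n ≥ 3, M(n,2,3,1,2) = C(n,2) − C(⌊n/2⌋, 2), where C(·,·) is the binomial coefficient. -/
open Finset

section Aux
open Finset
variable {n : ℕ}

/-- pairs all of whose extensions to triples avoid color `i` -/
noncomputable def missed (n : ℕ) (c : Finset (Fin n) → Fin 2) (i : Fin 2) :
    Finset (Finset (Fin n)) :=
  (Finset.univ.powersetCard 2).filter
    (fun p => ∀ e : Finset (Fin n), e.card = 3 → p ⊆ e → c e ≠ i)

lemma fin2_ne (a : Fin 2) (h : a ≠ 0) : a = 1 := by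
  fin_cases a <;> simp_all

lemma fin2_ne' (a : Fin 2) (h : a ≠ 1) : a = 0 := by
  fin_cases a <;> simp_all

lemma mem_missed {c : Finset (Fin n) → Fin 2} {i : Fin 2} {p : Finset (Fin n)} :
    p ∈ missed n c i ↔ p.card = 2 ∧ ∀ e : Finset (Fin n), e.card = 3 → p ⊆ e → c e ≠ i := by
  simp [missed, Finset.mem_powersetCard, Finset.subset_univ]

lemma mem_colorClass {c : Finset (Fin n) → Fin 2} {i : Fin 2} {e : Finset (Fin n)} :
    e ∈ colorClass n 2 3 c i ↔ e.card = 3 ∧ c e = i := by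
  simp [colorClass, Finset.mem_powersetCard, Finset.subset_univ]

lemma conn_of_pair (H : Finset (Finset (Fin n)))
    (hH : ∀ e ∈ H, e.card = 3) {p : Finset (Fin n)} (hp2 : p.card = 2)
    (hall : ∀ e : Finset (Fin n), e.card = 3 → p ⊆ e → e ∈ H) :
    ∀ e ∈ H, ∀ f ∈ H, TightConn 1 H e f := by
  have key : ∀ e ∈ H, ∃ t, t ∈ H ∧ p ⊆ t ∧ TightStep 1 H e t := by
    intro e he
    have h3 := hH e he
    have hne : (e \ p).Nonempty := by
      rw [Finset.sdiff_nonempty]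
      intro hsub
      have := Finset.card_le_card hsub
      omega
    obtain ⟨x, hx⟩ := hne
    rw [Finset.mem_sdiff] at hx
    refine ⟨insert x p, ?_, Finset.subset_insert _ _, ?_⟩
    · exact hall _ (by rw [Finset.card_insert_of_notMem hx.2, hp2]) (Finset.subset_insert _ _)
    · refine ⟨he, hall _ (by rw [Finset.card_insert_of_notMem hx.2, hp2])
        (Finset.subset_insert _ _), ?_⟩
      have : x ∈ e ∩ insert x p := Finset.mem_inter.2 ⟨hx.1, Finset.mem_insert_self _ _⟩
      exact Finset.card_pos.2 ⟨x, this⟩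
  intro e he f hf
  obtain ⟨te, hteH, hpte, hste⟩ := key e he
  obtain ⟨tf, htfH, hptf, hstf⟩ := key f hf
  have step2 : TightStep 1 H te tf := by
    refine ⟨hteH, htfH, ?_⟩
    have hsub : p ⊆ te ∩ tf := Finset.subset_inter hpte hptf
    have := Finset.card_le_card hsub
    omega
  have step3 : TightStep 1 H tf f :=
    ⟨htfH, hf, by rw [Finset.inter_comm]; exact hstf.2.2⟩
  exact Relation.ReflTransGen.head hste
    (Relation.ReflTransGen.head step2 (Relation.ReflTransGen.single step3))

lemma conn_of_cover (H : Finset (Finset (Fin n))) (hH : ∀ e ∈ H, e.card = 3)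
    (hcov : ∀ p : Finset (Fin n), p.card = 2 → ∃ t ∈ H, p ⊆ t) :
    ∀ e ∈ H, ∀ f ∈ H, TightConn 1 H e f := by
  intro e he f hf
  have he3 := hH e he
  have hf3 := hH f hf
  obtain ⟨x, hx⟩ : e.Nonempty := Finset.card_pos.1 (by omega)
  obtain ⟨y, hy⟩ : f.Nonempty := Finset.card_pos.1 (by omega)
  by_cases hxy : x = y
  · subst hxy
    exact Relation.ReflTransGen.single
      ⟨he, hf, Finset.card_pos.2 ⟨x, Finset.mem_inter.2 ⟨hx, hy⟩⟩⟩
  · obtain ⟨t, htH, hpt⟩ := hcov {x, y} (Finset.card_pair hxy)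
    have hxt : x ∈ t := hpt (by simp)
    have hyt : y ∈ t := hpt (by simp)
    have s1 : TightStep 1 H e t := ⟨he, htH, Finset.card_pos.2 ⟨x, Finset.mem_inter.2 ⟨hx, hxt⟩⟩⟩
    have s2 : TightStep 1 H t f := ⟨htH, hf, Finset.card_pos.2 ⟨y, Finset.mem_inter.2 ⟨hyt, hy⟩⟩⟩
    exact Relation.ReflTransGen.head s1 (Relation.ReflTransGen.single s2)

lemma color_lower (c : Finset (Fin n) → Fin 2) (i : Fin 2)
    (hconn : ∀ e ∈ colorClass n 2 3 c i, ∀ f ∈ colorClass n 2 3 c i,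
      TightConn 1 (colorClass n 2 3 c i) e f)
    (e0 : Finset (Fin n)) (he0 : e0 ∈ colorClass n 2 3 c i) :
    n.choose 2 - (missed n c i).card ≤ Mcol n 2 3 1 2 c := by
  classical
  have hcomp : tightComponent 1 (colorClass n 2 3 c i) e0 = colorClass n 2 3 c i := by
    rw [tightComponent]
    exact Finset.filter_true_of_mem (fun f hf => hconn e0 he0 f hf)
  have hsub : (Finset.univ.powersetCard 2) \ missed n c i ⊆
      hShadow 2 (colorClass n 2 3 c i) := by
    intro p hp
    rw [Finset.mem_sdiff, Finset.mem_powersetCard] at hp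
    obtain ⟨⟨-, hp2⟩, hpm⟩ := hp
    rw [mem_missed] at hpm
    push_neg at hpm
    obtain ⟨e, he3, hpe, hce⟩ := hpm hp2
    rw [hShadow, Finset.mem_biUnion]
    exact ⟨e, mem_colorClass.2 ⟨he3, hce⟩,
      Finset.mem_powersetCard.2 ⟨hpe, hp2⟩⟩
  have h1 : (Finset.univ.powersetCard 2 : Finset (Finset (Fin n))).card = n.choose 2 := by
    rw [Finset.card_powersetCard, Finset.card_univ, Fintype.card_fin]
  have hfin : (hShadow 2 (tightComponent 1 (colorClass n 2 3 c i) e0)).card ≤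
      Mcol n 2 3 1 2 c := by
    refine le_trans (Finset.le_sup he0
      (f := fun e => (hShadow 2 (tightComponent 1 (colorClass n 2 3 c i) e)).card)) ?_
    exact Finset.le_sup (Finset.mem_univ i)
      (f := fun j : Fin 2 => (colorClass n 2 3 c j).sup
        fun e => (hShadow 2 (tightComponent 1 (colorClass n 2 3 c j) e)).card)
  calc n.choose 2 - (missed n c i).card
      = (Finset.univ.powersetCard 2 : Finset (Finset (Fin n))).card - (missed n c i).card := by
        rw [h1]
    _ ≤ ((Finset.univ.powersetCard 2 : Finset (Finset (Fin n))) \ missed n c i).card :=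
        Finset.le_card_sdiff _ _
    _ ≤ (hShadow 2 (colorClass n 2 3 c i)).card := Finset.card_le_card hsub
    _ = (hShadow 2 (tightComponent 1 (colorClass n 2 3 c i) e0)).card := by rw [hcomp]
    _ ≤ _ := hfin

lemma missed_min (hn : 3 ≤ n) (c : Finset (Fin n) → Fin 2) :
    (missed n c 0).card ≤ (n / 2).choose 2 ∨ (missed n c 1).card ≤ (n / 2).choose 2 := by
  classical
  have hcard : ∀ i : Fin 2,
      (missed n c i).card ≤ (((missed n c i).biUnion id).card).choose 2 := by
    intro i
    have hsubM : missed n c i ⊆ ((missed n c i).biUnion id).powersetCard 2 := by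
      intro p hp
      have hp2 : p.card = 2 := (mem_missed.1 hp).1
      refine Finset.mem_powersetCard.2 ⟨?_, hp2⟩
      intro v hv
      exact Finset.mem_biUnion.2 ⟨p, hp, hv⟩
    have := Finset.card_le_card hsubM
    rwa [Finset.card_powersetCard] at this
  have hdisj : Disjoint ((missed n c 0).biUnion id) ((missed n c 1).biUnion id) := by
    rw [Finset.disjoint_left]
    intro v h0 h1
    obtain ⟨p, hpM, hvp⟩ := Finset.mem_biUnion.1 h0
    obtain ⟨q, hqM, hvq⟩ := Finset.mem_biUnion.1 h1
    rw [mem_missed] at hpM hqM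
    simp only [id] at hvp hvq
    have hcup : (p ∪ q).card ≤ 3 := by
      have h4 := Finset.card_union_add_card_inter p q
      have h5 : 1 ≤ (p ∩ q).card :=
        Finset.card_pos.2 ⟨v, Finset.mem_inter.2 ⟨hvp, hvq⟩⟩
      omega
    obtain ⟨t, hst, -, ht3⟩ := Finset.exists_subsuperset_card_eq
      (Finset.subset_univ (p ∪ q)) hcup
      (by rw [Finset.card_univ, Fintype.card_fin]; omega)
    have h0' := hpM.2 t ht3 ((Finset.subset_union_left).trans hst)
    have h1' := hqM.2 t ht3 ((Finset.subset_union_right).trans hst)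
    exact h1' (fin2_ne _ h0')
  have hsum : ((missed n c 0).biUnion id).card + ((missed n c 1).biUnion id).card ≤ n := by
    have h := Finset.card_le_univ (((missed n c 0).biUnion id) ∪ ((missed n c 1).biUnion id))
    rw [Finset.card_union_of_disjoint hdisj, Fintype.card_fin] at h
    exact h
  by_cases h : ((missed n c 0).biUnion id).card ≤ n / 2
  · exact Or.inl (le_trans (hcard 0) (Nat.choose_le_choose 2 h))
  · have : ((missed n c 1).biUnion id).card ≤ n / 2 := by omega
    exact Or.inr (le_trans (hcard 1) (Nat.choose_le_choose 2 this))

lemma lower_empty (hn : 3 ≤ n) (c : Finset (Fin n) → Fin 2) (i : Fin 2)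
    (h : missed n c i = ∅) :
    n.choose 2 - (n / 2).choose 2 ≤ Mcol n 2 3 1 2 c := by
  classical
  have hH3 : ∀ e ∈ colorClass n 2 3 c i, e.card = 3 :=
    fun e he => (mem_colorClass.1 he).1
  have hcov : ∀ p : Finset (Fin n), p.card = 2 → ∃ t ∈ colorClass n 2 3 c i, p ⊆ t := by
    intro p hp2
    by_contra hcon
    push_neg at hcon
    have hmem : p ∈ missed n c i := by
      rw [mem_missed]
      refine ⟨hp2, fun e h3 hsub hc => ?_⟩
      exact hcon e (mem_colorClass.2 ⟨h3, hc⟩) hsub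
    rw [h] at hmem
    exact absurd hmem (Finset.notMem_empty p)
  have hconn := conn_of_cover _ hH3 hcov
  obtain ⟨p, -, hp2⟩ := Finset.exists_subset_card_eq
    (show 2 ≤ (Finset.univ : Finset (Fin n)).card by rw [Finset.card_univ, Fintype.card_fin]; omega)
  obtain ⟨t, htH, -⟩ := hcov p hp2
  have b := color_lower c i hconn t htH
  rw [h, Finset.card_empty, Nat.sub_zero] at b
  exact le_trans (Nat.sub_le _ _) b

lemma lower_bound (hn : 3 ≤ n) (c : Finset (Fin n) → Fin 2) :
    n.choose 2 - (n / 2).choose 2 ≤ Mcol n 2 3 1 2 c := by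
  classical
  by_cases h0 : missed n c 0 = ∅
  · exact lower_empty hn c 0 h0
  by_cases h1 : missed n c 1 = ∅
  · exact lower_empty hn c 1 h1
  obtain ⟨p0, hp0⟩ := Finset.nonempty_of_ne_empty h0
  obtain ⟨p1, hp1⟩ := Finset.nonempty_of_ne_empty h1
  rw [mem_missed] at hp0 hp1
  -- connectivity of color 1 via p0
  have hall1 : ∀ e : Finset (Fin n), e.card = 3 → p0 ⊆ e → e ∈ colorClass n 2 3 c 1 :=
    fun e h3 hsub => mem_colorClass.2 ⟨h3, fin2_ne _ (hp0.2 e h3 hsub)⟩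
  have hall0 : ∀ e : Finset (Fin n), e.card = 3 → p1 ⊆ e → e ∈ colorClass n 2 3 c 0 :=
    fun e h3 hsub => mem_colorClass.2 ⟨h3, fin2_ne' _ (hp1.2 e h3 hsub)⟩
  have hconn1 := conn_of_pair (colorClass n 2 3 c 1)
    (fun e he => (mem_colorClass.1 he).1) hp0.1 hall1
  have hconn0 := conn_of_pair (colorClass n 2 3 c 0)
    (fun e he => (mem_colorClass.1 he).1) hp1.1 hall0
  have hcardu : (3:ℕ) ≤ (Finset.univ : Finset (Fin n)).card := by
    rw [Finset.card_univ, Fintype.card_fin]; omega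
  obtain ⟨t1, hsub1, -, ht13⟩ := Finset.exists_subsuperset_card_eq
    (Finset.subset_univ p0) (by rw [hp0.1]; omega) hcardu
  obtain ⟨t0, hsub0, -, ht03⟩ := Finset.exists_subsuperset_card_eq
    (Finset.subset_univ p1) (by rw [hp1.1]; omega) hcardu
  have b1 := color_lower c 1 hconn1 t1 (hall1 t1 ht13 hsub1)
  have b0 := color_lower c 0 hconn0 t0 (hall0 t0 ht03 hsub0)
  rcases missed_min hn c with h | h
  · exact le_trans (Nat.sub_le_sub_left h _) b0
  · exact le_trans (Nat.sub_le_sub_left h _) b1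

/-- the extremal coloring: color 0 iff at most one vertex below `n/2` -/
def halfCol (n : ℕ) : Finset (Fin n) → Fin 2 := fun e =>
  if (e.filter (fun v : Fin n => (v : ℕ) < n / 2)).card ≤ 1 then 0 else 1

lemma upper_bound (hn : 3 ≤ n) :
    Mcol n 2 3 1 2 (halfCol n) ≤ n.choose 2 - (n / 2).choose 2 := by
  classical
  have hb : n / 2 < n := by omega
  set B : Finset (Fin n) := Finset.Iio (⟨n / 2, hb⟩ : Fin n) with hBdef
  have hBmem : ∀ v : Fin n, v ∈ B ↔ (v : ℕ) < n / 2 := by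
    intro v
    rw [hBdef, Finset.mem_Iio, Fin.lt_def]
  have hBcard : B.card = n / 2 := by
    rw [hBdef, Fin.card_Iio]
  have hBc : Bᶜ.card = n - n / 2 := by
    rw [Finset.card_compl, hBcard, Fintype.card_fin]
  have count : ∀ S : Finset (Fin n),
      ((Finset.univ.powersetCard 2 : Finset (Finset (Fin n))) \ S.powersetCard 2).card
        = n.choose 2 - S.card.choose 2 := by
    intro S
    rw [Finset.card_sdiff_of_subset (Finset.powersetCard_mono (Finset.subset_univ S)),
      Finset.card_powersetCard, Finset.card_powersetCard, Finset.card_univ, Fintype.card_fin]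
  rw [Mcol]
  apply Finset.sup_le
  intro i _
  apply Finset.sup_le
  intro e he
  fin_cases i
  · have hsub : hShadow 2 (tightComponent 1 (colorClass n 2 3 (halfCol n) 0) e) ⊆
        Finset.univ.powersetCard 2 \ B.powersetCard 2 := by
      intro p hp
      obtain ⟨f, hf, hpf⟩ := Finset.mem_biUnion.1 hp
      have hfH : f ∈ colorClass n 2 3 (halfCol n) 0 := Finset.mem_of_mem_filter f hf
      obtain ⟨hf3, hcf⟩ := mem_colorClass.1 hfH
      rw [Finset.mem_powersetCard] at hpf
      rw [Finset.mem_sdiff, Finset.mem_powersetCard, Finset.mem_powersetCard]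
      refine ⟨⟨Finset.subset_univ p, hpf.2⟩, fun hpB => ?_⟩
      have hfilter : (f.filter (fun v : Fin n => (v : ℕ) < n / 2)).card ≤ 1 := by
        by_contra hcon
        simp only [halfCol, if_neg hcon] at hcf
        exact absurd hcf (by decide)
      have hsf : p ⊆ f.filter (fun v : Fin n => (v : ℕ) < n / 2) := by
        intro v hv
        exact Finset.mem_filter.2 ⟨hpf.1 hv, (hBmem v).1 (hpB.1 hv)⟩
      have := Finset.card_le_card hsf
      omega
    calc _ ≤ _ := Finset.card_le_card hsub
      _ = n.choose 2 - (n / 2).choose 2 := by rw [count, hBcard]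
  · have hsub : hShadow 2 (tightComponent 1 (colorClass n 2 3 (halfCol n) 1) e) ⊆
        Finset.univ.powersetCard 2 \ Bᶜ.powersetCard 2 := by
      intro p hp
      obtain ⟨f, hf, hpf⟩ := Finset.mem_biUnion.1 hp
      have hfH : f ∈ colorClass n 2 3 (halfCol n) 1 := Finset.mem_of_mem_filter f hf
      obtain ⟨hf3, hcf⟩ := mem_colorClass.1 hfH
      rw [Finset.mem_powersetCard] at hpf
      rw [Finset.mem_sdiff, Finset.mem_powersetCard, Finset.mem_powersetCard]
      refine ⟨⟨Finset.subset_univ p, hpf.2⟩, fun hpB => ?_⟩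
      have hfilter : ¬ (f.filter (fun v : Fin n => (v : ℕ) < n / 2)).card ≤ 1 := by
        intro hcon
        simp only [halfCol, if_pos hcon] at hcf
        exact absurd hcf (by decide)
      have hsplit := Finset.card_filter_add_card_filter_not
        (s := f) (p := fun v : Fin n => (v : ℕ) < n / 2)
      have hsf : p ⊆ f.filter (fun v : Fin n => ¬ (v : ℕ) < n / 2) := by
        intro v hv
        refine Finset.mem_filter.2 ⟨hpf.1 hv, ?_⟩
        have hvB : v ∉ B := Finset.mem_compl.1 (hpB.1 hv)
        intro hlt
        exact hvB ((hBmem v).2 hlt)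
      have := Finset.card_le_card hsf
      omega
    calc _ ≤ _ := Finset.card_le_card hsub
      _ = n.choose 2 - (n - n / 2).choose 2 := by rw [count, hBc]
      _ ≤ n.choose 2 - (n / 2).choose 2 :=
          Nat.sub_le_sub_left (Nat.choose_le_choose 2 (by omega)) _

end Aux

/-- For every `n ≥ 3`, `M(n,2,3,1,2) = C(n,2) - C(⌊n/2⌋,2)`. -/
theorem statement6 (n : ℕ) (hn : 3 ≤ n) :
    Mmin n 2 3 1 2 = n.choose 2 - (n / 2).choose 2 := by
  classical
  unfold Mmin
  apply le_antisymm
  · have h1 : Mcol n 2 3 1 2 (halfCol n) ∈ {m | ∃ c : Finset (Fin n) → Fin 2, Mcol n 2 3 1 2 c = m} :=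
      ⟨halfCol n, rfl⟩
    exact le_trans (Nat.sInf_le h1) (upper_bound hn)
  · refine le_csInf ⟨_, halfCol n, rfl⟩ ?_
    rintro m ⟨c, rfl⟩
    exact lower_bound hn c
end

section
/- Let k, t, s, n be positive integers with t ≤ k−1, s ≤ k ≤ n, let δ ∈ [0,1] be real, and let x be a real number with k ≤ x ≤ n. If ∏_{i=t}^{k−1} (x−i)/(n−i) ≥ δ, then ∏_{i=0}^{s−1} (x−i)/(n−i) ≥ δ^(s/(k−t)). -/
/-!
The factors `(x - i) / (n - i) = 1 - (n - x) / (n - i)` are positive and decrease in `i` for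
`i < k`, so the mean of their logarithms over `[0, s)` is at least their mean over `[0, k)`, which
in turn is at least their mean over `[t, k)`. Cross-multiplied and exponentiated this reads
`(∏_{[t,k)})^s ≤ (∏_{[0,s)})^(k-t)`, and the claim follows by taking `(k - t)`-th roots.
-/

open Finset

section AntitoneAverages

variable {M : Type*} [AddCommMonoid M]

theorem AntitoneOn.card_nsmul_sum_Ico_le [PartialOrder M] [IsOrderedAddMonoid M] {g : ℕ → M}
    {a b c : ℕ} (hg : AntitoneOn g (Set.Ico a c)) :
    (b - a) • ∑ j ∈ Ico b c, g j ≤ (c - b) • ∑ i ∈ Ico a b, g i := by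
  calc (b - a) • ∑ j ∈ Ico b c, g j = ∑ _i ∈ Ico a b, ∑ j ∈ Ico b c, g j := by
        rw [sum_const, Nat.card_Ico]
    _ ≤ ∑ i ∈ Ico a b, ∑ _j ∈ Ico b c, g i := by
        refine sum_le_sum fun i hi => sum_le_sum fun j hj => ?_
        rw [mem_Ico] at hi hj
        exact hg ⟨hi.1, by omega⟩ ⟨by omega, hj.2⟩ (by omega)
    _ = (c - b) • ∑ i ∈ Ico a b, g i := by
        simp only [sum_const, Nat.card_Ico, smul_sum]

theorem AntitoneOn.nsmul_sum_Ico_le_nsmul_sum_range [LinearOrder M] [IsOrderedCancelAddMonoid M]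
    {g : ℕ → M} {k s t : ℕ} (hg : AntitoneOn g (Set.Iio k)) (hsk : s ≤ k) (htk : t ≤ k) :
    s • ∑ i ∈ Ico t k, g i ≤ (k - t) • ∑ i ∈ range s, g i := by
  have hg₀ : AntitoneOn g (Set.Ico 0 k) := hg.mono fun i hi => hi.2
  have prefix_avg : s • ∑ i ∈ range k, g i ≤ k • ∑ i ∈ range s, g i := by
    have h := hg₀.card_nsmul_sum_Ico_le (b := s)
    rw [← sum_range_add_sum_Ico g hsk, nsmul_add]
    rw [← range_eq_Ico, Nat.sub_zero] at h
    calc s • ∑ i ∈ range s, g i + s • ∑ i ∈ Ico s k, g i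
        ≤ s • ∑ i ∈ range s, g i + (k - s) • ∑ i ∈ range s, g i := add_le_add_right h _
      _ = k • ∑ i ∈ range s, g i := by rw [← add_nsmul, Nat.add_sub_cancel' hsk]
  have suffix_avg : k • ∑ i ∈ Ico t k, g i ≤ (k - t) • ∑ i ∈ range k, g i := by
    have h := hg₀.card_nsmul_sum_Ico_le (b := t)
    rw [← sum_range_add_sum_Ico g htk, nsmul_add]
    rw [← range_eq_Ico, Nat.sub_zero] at h
    calc k • ∑ i ∈ Ico t k, g i = t • ∑ i ∈ Ico t k, g i + (k - t) • ∑ i ∈ Ico t k, g i := by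
          rw [← add_nsmul, Nat.add_sub_cancel' htk]
      _ ≤ (k - t) • ∑ i ∈ range t, g i + (k - t) • ∑ i ∈ Ico t k, g i := add_le_add_left h _
  rcases Nat.eq_zero_or_pos k with rfl | hk
  · simp
  rw [← nsmul_le_nsmul_iff_right hk.ne']
  calc k • s • ∑ i ∈ Ico t k, g i = s • k • ∑ i ∈ Ico t k, g i := by rw [smul_comm]
    _ ≤ s • (k - t) • ∑ i ∈ range k, g i := nsmul_le_nsmul_right suffix_avg s
    _ = (k - t) • s • ∑ i ∈ range k, g i := smul_comm _ _ _
    _ ≤ (k - t) • k • ∑ i ∈ range s, g i := nsmul_le_nsmul_right prefix_avg _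
    _ = k • (k - t) • ∑ i ∈ range s, g i := smul_comm _ _ _

end AntitoneAverages

theorem antitoneOn_sub_div_sub {x n : ℝ} (hxn : x ≤ n) :
    AntitoneOn (fun y : ℝ => (x - y) / (n - y)) (Set.Iio n) := by
  intro y hy z hz hyz
  have hy' : 0 < n - y := sub_pos.mpr hy
  have hz' : 0 < n - z := sub_pos.mpr hz
  dsimp only
  rw [div_le_div_iff₀ hz' hy']
  nlinarith [mul_nonneg (sub_nonneg.mpr hyz) (sub_nonneg.mpr hxn)]

theorem antitoneOn_log_sub_div_sub {x n : ℝ} {k : ℕ} (hkx : k ≤ x) (hxn : x ≤ n) :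
    AntitoneOn (fun i : ℕ => Real.log ((x - i) / (n - i))) (Set.Iio k) := by
  intro i _ j hj hij
  have hj' : (j : ℝ) < k := Nat.cast_lt.mpr hj
  have hij' : (i : ℝ) ≤ j := Nat.cast_le.mpr hij
  refine Real.log_le_log (div_pos (by linarith) (by linarith)) ?_
  exact antitoneOn_sub_div_sub hxn (show (i : ℝ) < n by linarith) (show (j : ℝ) < n by linarith)
    hij'

theorem Real.rpow_div_le_of_pow_le {P Q : ℝ} {a b : ℕ} (hP : 0 ≤ P) (hQ : 0 ≤ Q) (hb : b ≠ 0)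
    (h : P ^ a ≤ Q ^ b) : P ^ ((a : ℝ) / b) ≤ Q :=
  calc P ^ ((a : ℝ) / b) = (P ^ a) ^ ((b : ℝ)⁻¹) := by
        rw [div_eq_mul_inv, Real.rpow_mul hP, Real.rpow_natCast]
    _ ≤ (Q ^ b) ^ ((b : ℝ)⁻¹) := by gcongr
    _ = Q := Real.pow_rpow_inv_natCast hQ hb

theorem statement16_general (k t s n : ℕ) (htk : t + 1 ≤ k)
    (hsk : s ≤ k) (δ : ℝ) (hδ0 : 0 ≤ δ)
    (x : ℝ) (hx1 : (k : ℝ) ≤ x) (hx2 : x ≤ (n : ℝ))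
    (hprod : δ ≤ ∏ i ∈ Finset.Ico t k, (x - i) / ((n : ℝ) - i)) :
    δ ^ ((s : ℝ) / ((k : ℝ) - (t : ℝ))) ≤
      ∏ i ∈ Finset.range s, (x - i) / ((n : ℝ) - i) := by
  have hpos : ∀ i < k, 0 < (x - i) / ((n : ℝ) - i) := fun i hi => by
    have : (i : ℝ) < k := Nat.cast_lt.mpr hi
    exact div_pos (by linarith) (by linarith)
  have hP : 0 < ∏ i ∈ Ico t k, (x - i) / ((n : ℝ) - i) :=
    prod_pos fun i hi => hpos i (mem_Ico.mp hi).2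
  have hQ : 0 < ∏ i ∈ range s, (x - i) / ((n : ℝ) - i) :=
    prod_pos fun i hi => hpos i ((mem_range.mp hi).trans_le hsk)
  have hlog := (antitoneOn_log_sub_div_sub hx1 hx2).nsmul_sum_Ico_le_nsmul_sum_range hsk
    (Nat.le_of_succ_le htk)
  have hpow : (∏ i ∈ Ico t k, (x - i) / ((n : ℝ) - i)) ^ s ≤
      (∏ i ∈ range s, (x - i) / ((n : ℝ) - i)) ^ (k - t) := by
    rw [← Real.log_le_log_iff (pow_pos hP s) (pow_pos hQ _), Real.log_pow, Real.log_pow,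
      Real.log_prod fun i hi => (hpos i (mem_Ico.mp hi).2).ne',
      Real.log_prod fun i hi => (hpos i ((mem_range.mp hi).trans_le hsk)).ne']
    simpa only [nsmul_eq_mul] using hlog
  calc δ ^ ((s : ℝ) / ((k : ℝ) - (t : ℝ))) = δ ^ ((s : ℝ) / ((k - t : ℕ) : ℝ)) := by
        rw [Nat.cast_sub (Nat.le_of_succ_le htk)]
    _ ≤ (∏ i ∈ Ico t k, (x - i) / ((n : ℝ) - i)) ^ ((s : ℝ) / ((k - t : ℕ) : ℝ)) :=
        Real.rpow_le_rpow hδ0 hprod (by positivity)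
    _ ≤ _ := Real.rpow_div_le_of_pow_le hP.le hQ.le (by omega) hpow

/-- **Product inequality.** If `t ≤ k-1`, `s ≤ k ≤ n` are positive integers,
`δ ∈ [0,1]`, `k ≤ x ≤ n`, and `∏_{i=t}^{k-1} (x-i)/(n-i) ≥ δ`, then
`∏_{i=0}^{s-1} (x-i)/(n-i) ≥ δ^(s/(k-t))`. -/
theorem statement16 (k t s n : ℕ) (ht : 0 < t) (hs : 0 < s) (htk : t + 1 ≤ k)
    (hsk : s ≤ k) (hkn : k ≤ n) (δ : ℝ) (hδ0 : 0 ≤ δ) (hδ1 : δ ≤ 1)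
    (x : ℝ) (hx1 : (k : ℝ) ≤ x) (hx2 : x ≤ (n : ℝ))
    (hprod : δ ≤ ∏ i ∈ Finset.Ico t k, (x - i) / ((n : ℝ) - i)) :
    δ ^ ((s : ℝ) / ((k : ℝ) - (t : ℝ))) ≤
      ∏ i ∈ Finset.range s, (x - i) / ((n : ℝ) - i) :=
  statement16_general k t s n htk hsk δ hδ0 x hx1 hx2 hprod
end
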